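/- Let X, Y, Z be totally disconnected locally compact Hausdorff spaces with continuous maps p : X → Z, q : Y → Z. If U ⊆ X and V ⊆ Y are compact open subsets with p(U) ∩ q(V) = ∅, then there exists a compact open set E ⊆ Z with p(U) ⊆ E and E ∩ q(V) = ∅; consequently χ_U · (χ_E ∘ p) = χ_U and (χ_E ∘ q) · χ_V = 0, so the element χ_U ⊗ χ_V vanishes in the balanced tensor product C_c^∞(X) ⊗_{C_c^∞(Z)} C_c^∞(Y). -/

import Mathlib

open TensorProduct

theorem HasCompactSupport.add' {Z : Type*} [TopologicalSpace Z] {f g : Z → ℂ}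
    (hf : HasCompactSupport f) (hg : HasCompactSupport g) : HasCompactSupport (f + g) :=
  (hf.union hg).of_isClosed_subset isClosed_closure
    ((closure_mono (Function.support_add f g)).trans (le_of_eq closure_union))

theorem IsLocallyConstant.csmul {Z : Type*} [TopologicalSpace Z] {f : Z → ℂ} (c : ℂ)
    (hf : IsLocallyConstant f) : IsLocallyConstant (c • f) := by
  have : c • f = fun x => c * f x := by funext x; simp
  rw [this]
  exact hf.comp (c * ·)

/-- The space `C_c^∞(Z)` of locally constant compactly supported `ℂ`-valued functions,
as a `ℂ`-submodule of the function space. -/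
noncomputable def Cc (Z : Type) [TopologicalSpace Z] : Submodule ℂ (Z → ℂ) where
  carrier := {f | IsLocallyConstant f ∧ HasCompactSupport f}
  add_mem' := fun hf hg => ⟨hf.1.add hg.1, hf.2.add' hg.2⟩
  zero_mem' := ⟨IsLocallyConstant.const 0, by
    simp only [HasCompactSupport, tsupport]; simpa using isCompact_empty⟩
  smul_mem' := fun c f hf =>
    ⟨IsLocallyConstant.csmul c hf.1, hf.2.mono (Function.support_const_smul_subset c f)⟩

variable (X Y Z : Type) [TopologicalSpace X] [TopologicalSpace Y] [TopologicalSpace Z]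
  (p : X → Z) (q : Y → Z)

/-- The `C_c^∞(Z)`-module structure on `C_c^∞(X)` induced by `p : X → Z`:
`f · p*(h) = f · (h ∘ p)`. -/
noncomputable def pmul (hp : Continuous p) (f : Cc X) (h : Cc Z) : Cc X :=
  ⟨(f : X → ℂ) * fun x => (h : Z → ℂ) (p x),
    ⟨f.2.1.mul (h.2.1.comp_continuous hp), f.2.2.mul_right⟩⟩

/-- The `C_c^∞(Z)`-module structure on `C_c^∞(Y)` induced by `q : Y → Z`:
`q*(h) · g = (h ∘ q) · g`. -/
noncomputable def qmul (hq : Continuous q) (h : Cc Z) (g : Cc Y) : Cc Y :=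
  ⟨(fun y => (h : Z → ℂ) (q y)) * (g : Y → ℂ),
    ⟨(h.2.1.comp_continuous hq).mul g.2.1, g.2.2.mul_left⟩⟩

/-- The balancing relations defining `C_c^∞(X) ⊗_{C_c^∞(Z)} C_c^∞(Y)`. -/
noncomputable def balRel (hp : Continuous p) (hq : Continuous q) :
    Submodule ℂ (Cc X ⊗[ℂ] Cc Y) :=
  Submodule.span ℂ {t | ∃ (f : Cc X) (g : Cc Y) (h : Cc Z),
    t = (pmul X Z p hp f h) ⊗ₜ[ℂ] g - f ⊗ₜ[ℂ] (qmul Y Z q hq h g)}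

theorem exists_isCompact_isClopen_between {H : Type*} [TopologicalSpace H] [T2Space H]
    [LocallyCompactSpace H] [TotallyDisconnectedSpace H] {K O : Set H}
    (hK : IsCompact K) (hO : IsOpen O) (hKO : K ⊆ O) :
    ∃ E : Set H, IsCompact E ∧ IsClopen E ∧ K ⊆ E ∧ E ⊆ O := by
  obtain ⟨L, hLc, hKL, hLO⟩ := exists_compact_between hK hO hKO
  have hW : ∀ x ∈ K, ∃ W : Set H, IsClopen W ∧ x ∈ W ∧ W ⊆ interior L := fun x hx =>
    loc_compact_Haus_tot_disc_of_zero_dim.exists_subset_of_mem_open (hKL hx) isOpen_interior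
  choose! W hWc hxW hWL using hW
  obtain ⟨t, htK, hKt⟩ :=
    hK.elim_nhds_subcover W fun x hx => (hWc x hx).isOpen.mem_nhds (hxW x hx)
  have hE : IsClopen (⋃ x ∈ t, W x) := isClopen_biUnion_finset fun x hx => hWc x (htK x hx)
  have hEL : (⋃ x ∈ t, W x) ⊆ L :=
    Set.iUnion₂_subset fun x hx => (hWL x (htK x hx)).trans interior_subset
  exact ⟨_, hLc.of_isClosed_subset hE.isClosed hEL, hE, hKt, hEL.trans hLO⟩

theorem Set.indicator_one_mul_indicator_one_comp_of_mapsTo {α β M : Type*}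
    [MulZeroOneClass M] {f : α → β} {s : Set α} {t : Set β} (h : Set.MapsTo f s t) :
    (s.indicator (fun _ => (1 : M)) * fun x => t.indicator (fun _ => 1) (f x)) =
      s.indicator fun _ => 1 := by
  funext x
  by_cases hx : x ∈ s
  · simp [hx, h hx]
  · simp [hx]

theorem Set.indicator_one_comp_mul_indicator_one_of_mapsTo_compl {α β M : Type*}
    [MulZeroOneClass M] {f : α → β} {s : Set α} {t : Set β} (h : Set.MapsTo f s tᶜ) :
    ((fun x => t.indicator (fun _ => (1 : M)) (f x)) * s.indicator fun _ => 1) = 0 := by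
  funext x
  by_cases hx : x ∈ s
  · simp [Set.indicator_of_notMem (h hx)]
  · simp [hx]

noncomputable def Cc.indicator {W : Type} [TopologicalSpace W] {E : Set W}
    (hEc : IsCompact E) (hE : IsClopen E) : Cc W :=
  ⟨E.indicator fun _ => 1, ((LocallyConstant.const W (1 : ℂ)).indicator hE).isLocallyConstant,
    HasCompactSupport.intro' hEc hE.isClosed fun _ hz => Set.indicator_of_notMem hz _⟩

theorem tmul_mem_balRel_of_pmul_eq_of_qmul_eq_zero {hp : Continuous p} {hq : Continuous q}
    {f : Cc X} {g : Cc Y} {h : Cc Z} (hf : pmul X Z p hp f h = f) (hg : qmul Y Z q hq h g = 0) :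
    f ⊗ₜ[ℂ] g ∈ balRel X Y Z p q hp hq :=
  Submodule.subset_span ⟨f, g, h, by rw [hf, hg, tmul_zero]; exact (sub_zero (f ⊗ₜ[ℂ] g)).symm⟩

theorem stmt_8
    [T2Space Z] [LocallyCompactSpace Z] [TotallyDisconnectedSpace Z]
    (hp : Continuous p) (hq : Continuous q)
    (U : Set X) (hUc : IsCompact U)
    (V : Set Y) (hVc : IsCompact V)
    (hdisj : p '' U ∩ q '' V = ∅)
    (χU : Cc X) (hχU : (χU : X → ℂ) = U.indicator fun _ => 1)
    (χV : Cc Y) (hχV : (χV : Y → ℂ) = V.indicator fun _ => 1) :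
    ∃ E : Set Z, IsCompact E ∧ IsOpen E ∧ p '' U ⊆ E ∧ E ∩ q '' V = ∅ ∧
      (U.indicator (fun _ => (1 : ℂ)) * fun x => E.indicator (fun _ => (1 : ℂ)) (p x))
        = U.indicator (fun _ => (1 : ℂ)) ∧
      ((fun y => E.indicator (fun _ => (1 : ℂ)) (q y)) * V.indicator fun _ => (1 : ℂ)) = 0 ∧
      χU ⊗ₜ[ℂ] χV ∈ balRel X Y Z p q hp hq := by
  have hUV : p '' U ⊆ (q '' V)ᶜ :=
    Set.subset_compl_iff_disjoint_right.2 (Set.disjoint_iff_inter_eq_empty.2 hdisj)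
  obtain ⟨E, hEc, hE, hUE, hEV⟩ :=
    exists_isCompact_isClopen_between (hUc.image hp) (hVc.image hq).isClosed.isOpen_compl hUV
  have hpE : Set.MapsTo p U E := Set.image_subset_iff.1 hUE
  have hqE : Set.MapsTo q V Eᶜ := fun y hy hqy => hEV hqy ⟨y, hy, rfl⟩
  have hχUE := Set.indicator_one_mul_indicator_one_comp_of_mapsTo (M := ℂ) hpE
  have hχVE := Set.indicator_one_comp_mul_indicator_one_of_mapsTo_compl (M := ℂ) hqE
  refine ⟨E, hEc, hE.isOpen, hUE,
    Set.disjoint_iff_inter_eq_empty.1 (Set.subset_compl_iff_disjoint_right.1 hEV), hχUE, hχVE, ?_⟩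
  refine tmul_mem_balRel_of_pmul_eq_of_qmul_eq_zero X Y Z p q (h := Cc.indicator hEc hE) ?_ ?_
  · exact Subtype.ext (by simp only [pmul, hχU]; exact hχUE)
  · exact Subtype.ext (by simp only [qmul, hχV]; exact hχVE)
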